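/- Fix m > 0 and define h₁(σ) = x·exp(−(x − mσ)²/(2σ))/σ^{3/2} for σ > 0. For each x > 0, h₁ attains its maximum over (0,∞) at σ = s₁(x) = (√(4m²x² + 9) − 3)/(2m²), and x ↦ h₁(s₁(x)) is bounded on [a,∞) for every a > 0. -/

import Mathlib

/-! On `(0,∞)`, `log h₁(σ) = log x + m x − x²/(2σ) − m²σ/2 − (3/2) log σ`, whose critical points
are the roots of `m²σ² + 3σ = x²`; the positive root is `s₁(x)`. Comparing with `σ` through
`log s − log σ ≤ s/σ − 1` leaves the exponent gap `m²(s − σ)²/(2σ) ≥ 0`. At the maximum,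
`h₁ ≤ x s^{-3/2} = √(m²/s + 3/s²)` by the critical-point equation, and `s₁` is increasing,
so on `[a,∞)` this is bounded by its value at `s₁(a)`. -/

open MeasureTheory Real

noncomputable def h1 (m x σ : ℝ) : ℝ :=
  x * Real.exp (-(x - m * σ) ^ 2 / (2 * σ)) / Real.sqrt (σ ^ 3)

noncomputable def s1 (m x : ℝ) : ℝ :=
  (Real.sqrt (4 * m ^ 2 * x ^ 2 + 9) - 3) / (2 * m ^ 2)

lemma sqrt_pow_three_eq_exp {σ : ℝ} (hσ : 0 < σ) :
    √(σ ^ 3) = exp (3 / 2 * log σ) := by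
  rw [mul_comm, ← rpow_def_of_pos hσ, sqrt_eq_rpow, ← rpow_natCast, ← rpow_mul hσ.le]
  norm_num

lemma h1_eq_mul_exp (m x : ℝ) {σ : ℝ} (hσ : 0 < σ) :
    h1 m x σ = x * exp (m * x - x ^ 2 / (2 * σ) - m ^ 2 * σ / 2 - 3 / 2 * log σ) := by
  rw [h1, sqrt_pow_three_eq_exp hσ, mul_div_assoc, ← exp_sub]
  congr 2
  field_simp
  ring

lemma s1_pos {m x : ℝ} (hm : m ≠ 0) (hx : x ≠ 0) : 0 < s1 m x := by
  have : 3 < √(4 * m ^ 2 * x ^ 2 + 9) := by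
    rw [show (3 : ℝ) = √(3 ^ 2) by simp]
    have : 0 < m ^ 2 * x ^ 2 := by positivity
    gcongr
    linarith
  unfold s1
  have : 0 < m ^ 2 := by positivity
  positivity

lemma sq_eq_of_s1 (x : ℝ) {m : ℝ} (hm : m ≠ 0) :
    x ^ 2 = m ^ 2 * s1 m x ^ 2 + 3 * s1 m x := by
  have hr : √(4 * m ^ 2 * x ^ 2 + 9) ^ 2 = 4 * m ^ 2 * x ^ 2 + 9 := sq_sqrt (by positivity)
  unfold s1
  generalize √(4 * m ^ 2 * x ^ 2 + 9) = r at hr ⊢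
  field_simp
  linear_combination -hr

lemma s1_monotoneOn (m : ℝ) : MonotoneOn (s1 m) (Set.Ici 0) := by
  intro a ha x _ hax
  unfold s1
  gcongr

lemma h1_le_of_sq_eq {m x s σ : ℝ} (hx : 0 ≤ x) (hs : 0 < s)
    (hcrit : x ^ 2 = m ^ 2 * s ^ 2 + 3 * s) (hσ : 0 < σ) : h1 m x σ ≤ h1 m x s := by
  rw [h1_eq_mul_exp m x hσ, h1_eq_mul_exp m x hs]
  gcongr ?_ * exp ?_
  have hlog : log s - log σ ≤ s / σ - 1 := by
    rw [← log_div hs.ne' hσ.ne']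
    exact log_le_sub_one_of_pos (div_pos hs hσ)
  have hgap : x ^ 2 / (2 * σ) - x ^ 2 / (2 * s) + m ^ 2 * σ / 2 - m ^ 2 * s / 2
      - 3 / 2 * (s / σ - 1) = m ^ 2 * (s - σ) ^ 2 / (2 * σ) := by
    rw [hcrit]; field_simp; ring
  have : 0 ≤ m ^ 2 * (s - σ) ^ 2 / (2 * σ) := by positivity
  linarith

lemma h1_le_div_sqrt (m : ℝ) {x σ : ℝ} (hx : 0 ≤ x) (hσ : 0 ≤ σ) :
    h1 m x σ ≤ x / √(σ ^ 3) := by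
  unfold h1
  gcongr
  refine mul_le_of_le_one_right hx (exp_le_one_iff.2 ?_)
  exact div_nonpos_of_nonpos_of_nonneg (neg_nonpos.2 (sq_nonneg _)) (by positivity)

lemma div_sqrt_pow_three_eq {m x s : ℝ} (hx : 0 ≤ x) (hs : 0 < s)
    (hcrit : x ^ 2 = m ^ 2 * s ^ 2 + 3 * s) :
    x / √(s ^ 3) = √(m ^ 2 / s + 3 / s ^ 2) := by
  rw [← sqrt_sq hx, ← sqrt_div' _ (by positivity), hcrit]
  congr 1
  field_simp

lemma h1_s1_le {m a x : ℝ} (hm : m ≠ 0) (ha : 0 < a) (hax : a ≤ x) :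
    h1 m x (s1 m x) ≤ √(m ^ 2 / s1 m a + 3 / s1 m a ^ 2) := by
  have hx : 0 ≤ x := ha.le.trans hax
  have hsa : 0 < s1 m a := s1_pos hm ha.ne'
  have hsx : s1 m a ≤ s1 m x := s1_monotoneOn m ha.le hx hax
  calc h1 m x (s1 m x) ≤ x / √(s1 m x ^ 3) := h1_le_div_sqrt m hx (hsa.trans_le hsx).le
    _ = √(m ^ 2 / s1 m x + 3 / s1 m x ^ 2) :=
        div_sqrt_pow_three_eq hx (hsa.trans_le hsx) (sq_eq_of_s1 x hm)
    _ ≤ √(m ^ 2 / s1 m a + 3 / s1 m a ^ 2) := by gcongr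

/-- For `m > 0` and each `x > 0`, `h₁` attains its maximum over `(0,∞)` at
`σ = s₁(x)`, and `x ↦ h₁(s₁(x))` is bounded on `[a,∞)` for every `a > 0`. -/
theorem h1_max_and_bounded (m : ℝ) (hm : 0 < m) :
    (∀ x, 0 < x → 0 < s1 m x ∧ ∀ σ, 0 < σ → h1 m x σ ≤ h1 m x (s1 m x)) ∧
      ∀ a, 0 < a → ∃ Cb : ℝ, ∀ x, a ≤ x → h1 m x (s1 m x) ≤ Cb := by
  refine ⟨fun x hx => ⟨s1_pos hm.ne' hx.ne', fun σ hσ => ?_⟩,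
    fun a ha => ⟨_, fun x hax => h1_s1_le hm.ne' ha hax⟩⟩
  exact h1_le_of_sq_eq hx.le (s1_pos hm.ne' hx.ne') (sq_eq_of_s1 x hm.ne') hσ
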